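/- arXiv:1708.00591 — 6 statements merged into one kernel-verified Lean document; each statement's English description precedes it below -/
import Mathlib

section
/- For all real numbers λ, μ, every unit vector ω = (ω₁, ω₂, 0) ∈ ℝ³, and every Σ ∈ ℂ, one has det(M₀ Σ² + M₁ Σ + M₂) = μ² (λ + 2μ) (1 + Σ²)³, where the real matrices M₀, M₁, M₂ are regarded as complex 3×3 matrices. -/
open Matrix

noncomputable section

/-- Isotropic elasticity tensor `C_{ijkl} = λ δ_{ij} δ_{kl} + μ (δ_{ik} δ_{jl} + δ_{il} δ_{jk})`. -/
def isoC (lam mu : ℝ) (i j k l : Fin 3) : ℝ :=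
  lam * (if i = j then (1:ℝ) else 0) * (if k = l then (1:ℝ) else 0)
    + mu * ((if i = k then (1:ℝ) else 0) * (if j = l then (1:ℝ) else 0)
      + (if i = l then (1:ℝ) else 0) * (if j = k then (1:ℝ) else 0))

/-- The matrix `⟨ξ,ζ⟩` with entries `⟨ξ,ζ⟩_{ik} = Σ_{j,l} C_{ijkl} ξ_j ζ_l`. -/
def bil (lam mu : ℝ) (ξ ζ : Fin 3 → ℝ) : Matrix (Fin 3) (Fin 3) ℝ :=
  Matrix.of fun i k => ∑ j, ∑ l, isoC lam mu i j k l * ξ j * ζ l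

/-- `M₀ = ⟨e₃,e₃⟩`. -/
def Mat0 (lam mu : ℝ) : Matrix (Fin 3) (Fin 3) ℝ := bil lam mu ![0,0,1] ![0,0,1]

/-- `M₁ = ⟨e₃,ω⟩ + ⟨ω,e₃⟩` for `ω = (ω₁,ω₂,0)`. -/
def Mat1 (lam mu ω1 ω2 : ℝ) : Matrix (Fin 3) (Fin 3) ℝ :=
  bil lam mu ![0,0,1] ![ω1,ω2,0] + bil lam mu ![ω1,ω2,0] ![0,0,1]

/-- `M₂ = ⟨ω,ω⟩`. -/
def Mat2 (lam mu ω1 ω2 : ℝ) : Matrix (Fin 3) (Fin 3) ℝ :=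
  bil lam mu ![ω1,ω2,0] ![ω1,ω2,0]

/-- `⟨e₃,ω⟩`. -/
def E3w (lam mu ω1 ω2 : ℝ) : Matrix (Fin 3) (Fin 3) ℝ := bil lam mu ![0,0,1] ![ω1,ω2,0]

/-- `⟨ω,e₃⟩`. -/
def wE3 (lam mu ω1 ω2 : ℝ) : Matrix (Fin 3) (Fin 3) ℝ := bil lam mu ![ω1,ω2,0] ![0,0,1]

/-- The 6×6 Stroh matrix
`K⁰ = [[−M₀⁻¹⟨e₃,ω⟩, −M₀⁻¹], [M₂ − ⟨ω,e₃⟩M₀⁻¹⟨e₃,ω⟩, −⟨ω,e₃⟩M₀⁻¹]]`. -/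
def Stroh (lam mu ω1 ω2 : ℝ) : Matrix (Fin 6) (Fin 6) ℝ :=
  Matrix.reindex finSumFinEquiv finSumFinEquiv
    (Matrix.fromBlocks
      (-((Mat0 lam mu)⁻¹ * E3w lam mu ω1 ω2)) (-(Mat0 lam mu)⁻¹)
      (Mat2 lam mu ω1 ω2 - wE3 lam mu ω1 ω2 * (Mat0 lam mu)⁻¹ * E3w lam mu ω1 ω2)
      (-(wE3 lam mu ω1 ω2 * (Mat0 lam mu)⁻¹)))

/-- Complex versions (real matrices regarded as complex matrices). -/
def Mat0c (lam mu : ℝ) : Matrix (Fin 3) (Fin 3) ℂ := (Mat0 lam mu).map Complex.ofReal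

def Mat1c (lam mu ω1 ω2 : ℝ) : Matrix (Fin 3) (Fin 3) ℂ := (Mat1 lam mu ω1 ω2).map Complex.ofReal

def Mat2c (lam mu ω1 ω2 : ℝ) : Matrix (Fin 3) (Fin 3) ℂ := (Mat2 lam mu ω1 ω2).map Complex.ofReal

def E3wc (lam mu ω1 ω2 : ℝ) : Matrix (Fin 3) (Fin 3) ℂ := (E3w lam mu ω1 ω2).map Complex.ofReal

def Strohc (lam mu ω1 ω2 : ℝ) : Matrix (Fin 6) (Fin 6) ℂ := (Stroh lam mu ω1 ω2).map Complex.ofReal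

end

/-- `det(M₀ Σ² + M₁ Σ + M₂) = μ² (λ + 2μ) (1 + Σ²)³` for every `Σ ∈ ℂ` and every unit
vector `ω = (ω₁, ω₂, 0)`. -/
theorem stmt1 (lam mu ω1 ω2 : ℝ) (hω : ω1 ^ 2 + ω2 ^ 2 = 1) (z : ℂ) :
    Matrix.det (z ^ 2 • Mat0c lam mu + z • Mat1c lam mu ω1 ω2 + Mat2c lam mu ω1 ω2)
      = (mu : ℂ) ^ 2 * ((lam : ℂ) + 2 * (mu : ℂ)) * (1 + z ^ 2) ^ 3 := by
  have h : (ω1:ℂ)^2 + (ω2:ℂ)^2 = 1 := by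
    have := congrArg (Complex.ofReal) hω; push_cast at this; exact this
  simp only [Matrix.det_fin_three, Mat0c, Mat1c, Mat2c, Mat0, Mat1, Mat2, bil, isoC,
    Matrix.add_apply, Matrix.smul_apply, Matrix.map_apply, Matrix.of_apply,
    Fin.sum_univ_three, Matrix.cons_val_zero, Matrix.cons_val_one, Matrix.head_cons,
    Matrix.cons_val_two, Matrix.tail_cons]
  norm_num
  push_cast
  linear_combination ((mu:ℂ)^2*((lam:ℂ)+2*mu)*(3*z^2*(((ω1:ℂ)^2+(ω2:ℂ)^2)+1)+3*z^4+((ω1:ℂ)^2+(ω2:ℂ)^2)^2+((ω1:ℂ)^2+(ω2:ℂ)^2)+1))*h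
end

section
/- Assume μ > 0 and 3λ + 2μ > 0 and let ω = (ω₁, ω₂, 0) be a unit vector. Then the vector q₁⁺ := (ω₂, −ω₁, 0, −iμω₂, iμω₁, 0) ∈ ℂ⁶ satisfies K⁰ q₁⁺ = i q₁⁺, and its componentwise complex conjugate q₁⁻ satisfies K⁰ q₁⁻ = −i q₁⁻. -/
/-!
Write `a = (ω₂, −ω₁, 0)`, `u = (a, 0)` and `v = (0, μ a)`, so that `q₁^± = u ∓ i v`.
The tensor acts by `⟨ξ,ζ⟩ x = λ (ζ·x) ξ + μ (ξ·ζ) x + μ (ξ·x) ζ`, and `a` is orthogonal to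
both `ω` and `e₃`; hence `⟨e₃,ω⟩ a = ⟨ω,e₃⟩ a = 0` and `M₀ a = M₂ a = μ a`. Plugging this
into the blocks of `K⁰` gives `K⁰ u = v` and `K⁰ v = −u`: on the real plane spanned by `u`
and `v` the Stroh matrix is a quarter turn, whose eigenvectors are `u ∓ i v` with
eigenvalues `±i`.
-/

open Matrix

theorem bil_mulVec (lam mu : ℝ) (ξ ζ v : Fin 3 → ℝ) :
    bil lam mu ξ ζ *ᵥ v = (lam * (ζ ⬝ᵥ v)) • ξ + (mu * (ξ ⬝ᵥ ζ)) • v + (mu * (ξ ⬝ᵥ v)) • ζ := by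
  ext i
  fin_cases i <;>
    simp [bil, isoC, mulVec, dotProduct, Fin.sum_univ_three] <;> ring

theorem Mat0_eq_diagonal (lam mu : ℝ) : Mat0 lam mu = diagonal ![mu, mu, lam + 2 * mu] := by
  ext i k
  fin_cases i <;> fin_cases k <;> simp [Mat0, bil, isoC, Fin.sum_univ_three]
  ring

theorem isUnit_det_Mat0 {lam mu : ℝ} (hmu : mu ≠ 0) (hlam : lam + 2 * mu ≠ 0) :
    IsUnit (Mat0 lam mu).det := by
  simp [Mat0_eq_diagonal, Fin.prod_univ_three, hmu, hlam]

theorem Matrix.inv_mulVec_eq_inv_smul {n K : Type*} [Fintype n] [DecidableEq n] [Field K]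
    {A : Matrix n n K} (hA : IsUnit A.det) {c : K} (hc : c ≠ 0) {v : n → K}
    (h : A *ᵥ v = c • v) : A⁻¹ *ᵥ v = c⁻¹ • v := by
  have := A.invertibleOfIsUnitDet hA
  apply inv_mulVec_eq_vec
  rw [mulVec_smul, h, smul_smul, inv_mul_cancel₀ hc, one_smul]

theorem Matrix.reindex_fromBlocks_mulVec_append {R : Type*} [NonUnitalNonAssocSemiring R]
    {m n : ℕ} (A : Matrix (Fin m) (Fin m) R) (B : Matrix (Fin m) (Fin n) R)
    (C : Matrix (Fin n) (Fin m) R) (D : Matrix (Fin n) (Fin n) R) (x : Fin m → R) (y : Fin n → R) :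
    reindex finSumFinEquiv finSumFinEquiv (fromBlocks A B C D) *ᵥ Fin.append x y =
      Fin.append (A *ᵥ x + B *ᵥ y) (C *ᵥ x + D *ᵥ y) := by
  have hxy : Fin.append x y ∘ finSumFinEquiv = Sum.elim x y := by
    ext (i | i) <;> simp
  ext i
  refine Fin.addCases (fun i => ?_) (fun i => ?_) i <;>
    simp [reindex_apply, submatrix_mulVec_equiv, fromBlocks_mulVec, hxy]

theorem Fin.append_neg {α : Type*} [Neg α] {m n : ℕ} (u : Fin m → α) (v : Fin n → α) :
    Fin.append (-u) (-v) = -Fin.append u v := by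
  ext i
  refine Fin.addCases (fun i => ?_) (fun i => ?_) i <;> simp

theorem Matrix.map_ofReal_mulVec_add_smul {n : Type*} [Fintype n] {K : Matrix n n ℝ}
    {u v : n → ℝ} (hu : K *ᵥ u = v) (hv : K *ᵥ v = -u) {s : ℂ} (hs : s ^ 2 = -1) :
    K.map Complex.ofReal *ᵥ (fun j => (u j : ℂ) + s * v j) =
      (-s) • fun j => (u j : ℂ) + s * v j := by
  have hK (w : n → ℝ) : K.map Complex.ofRealHom *ᵥ (Complex.ofRealHom ∘ w) =
      Complex.ofRealHom ∘ (K *ᵥ w) :=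
    funext fun i => (RingHom.map_mulVec _ K w i).symm
  calc K.map Complex.ofReal *ᵥ (fun j => (u j : ℂ) + s * v j)
      = K.map Complex.ofRealHom *ᵥ (Complex.ofRealHom ∘ u) +
          s • K.map Complex.ofRealHom *ᵥ (Complex.ofRealHom ∘ v) := by
        rw [← mulVec_smul, ← mulVec_add]; rfl
    _ = Complex.ofRealHom ∘ v + s • Complex.ofRealHom ∘ (-u) := by rw [hK, hK, hu, hv]
    _ = (-s) • fun j => (u j : ℂ) + s * v j := by
        ext j
        simp only [Pi.add_apply, Pi.smul_apply, Function.comp_apply, Pi.neg_apply,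
          Complex.ofRealHom_eq_coe, Complex.ofReal_neg, smul_eq_mul]
        linear_combination (v j : ℂ) * hs

section Stroh

variable {lam mu ω1 ω2 : ℝ}

theorem E3w_mulVec_perp : E3w lam mu ω1 ω2 *ᵥ ![ω2, -ω1, 0] = 0 := by
  simp [E3w, bil_mulVec, mul_comm]

theorem wE3_mulVec_perp : wE3 lam mu ω1 ω2 *ᵥ ![ω2, -ω1, 0] = 0 := by
  simp [wE3, bil_mulVec, mul_comm]

theorem Mat0_mulVec_horizontal (a b : ℝ) : Mat0 lam mu *ᵥ ![a, b, 0] = mu • ![a, b, 0] := by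
  simp [Mat0, bil_mulVec]

theorem Mat2_mulVec_perp (hω : ω1 ^ 2 + ω2 ^ 2 = 1) :
    Mat2 lam mu ω1 ω2 *ᵥ ![ω2, -ω1, 0] = mu • ![ω2, -ω1, 0] := by
  have hω' : ω1 * ω1 + ω2 * ω2 = 1 := by linear_combination hω
  simp [Mat2, bil_mulVec, mul_comm, hω']

theorem Stroh_mulVec_append_perp_zero (hω : ω1 ^ 2 + ω2 ^ 2 = 1) :
    Stroh lam mu ω1 ω2 *ᵥ Fin.append ![ω2, -ω1, 0] (0 : Fin 3 → ℝ) =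
      Fin.append (0 : Fin 3 → ℝ) (mu • ![ω2, -ω1, 0]) := by
  rw [Stroh, reindex_fromBlocks_mulVec_append]
  simp [← mulVec_mulVec, neg_mulVec, sub_mulVec, E3w_mulVec_perp, Mat2_mulVec_perp hω]

theorem Stroh_mulVec_append_zero_perp (hmu : mu ≠ 0) (hlam : lam + 2 * mu ≠ 0) :
    Stroh lam mu ω1 ω2 *ᵥ Fin.append (0 : Fin 3 → ℝ) (mu • ![ω2, -ω1, 0]) =
      -Fin.append ![ω2, -ω1, 0] (0 : Fin 3 → ℝ) := by
  have hinv :=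
    inv_mulVec_eq_inv_smul (isUnit_det_Mat0 hmu hlam) hmu (Mat0_mulVec_horizontal ω2 (-ω1))
  rw [Stroh, reindex_fromBlocks_mulVec_append, mulVec_zero, mulVec_zero, zero_add, zero_add, neg_mulVec, neg_mulVec, ← mulVec_mulVec,
    mulVec_smul, hinv, smul_smul, mul_inv_cancel₀ hmu, one_smul, wE3_mulVec_perp]
  exact Fin.append_neg _ _

end Stroh

/-- The vector `q₁⁺ = (ω₂, −ω₁, 0, −iμω₂, iμω₁, 0)` is an eigenvector of the Stroh
matrix `K⁰` for the eigenvalue `i`, and its componentwise complex conjugate `q₁⁻` is an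
eigenvector for the eigenvalue `−i`. -/
theorem stmt2 (lam mu ω1 ω2 : ℝ) (hmu : 0 < mu) (hconv : 0 < 3 * lam + 2 * mu)
    (hω : ω1 ^ 2 + ω2 ^ 2 = 1) :
    Strohc lam mu ω1 ω2 *ᵥ
        (![(ω2 : ℂ), -(ω1 : ℂ), 0, -(Complex.I * mu * ω2), Complex.I * mu * ω1, 0] :
          Fin 6 → ℂ)
      = Complex.I •
        (![(ω2 : ℂ), -(ω1 : ℂ), 0, -(Complex.I * mu * ω2), Complex.I * mu * ω1, 0] :
          Fin 6 → ℂ) ∧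
    Strohc lam mu ω1 ω2 *ᵥ
        (fun j => starRingEnd ℂ
          ((![(ω2 : ℂ), -(ω1 : ℂ), 0, -(Complex.I * mu * ω2), Complex.I * mu * ω1, 0] :
            Fin 6 → ℂ) j))
      = (-Complex.I) •
        (fun j => starRingEnd ℂ
          ((![(ω2 : ℂ), -(ω1 : ℂ), 0, -(Complex.I * mu * ω2), Complex.I * mu * ω1, 0] :
            Fin 6 → ℂ) j)) := by
  have hlam : lam + 2 * mu ≠ 0 := (by linarith : 0 < lam + 2 * mu).ne'
  set u : Fin 6 → ℝ := Fin.append ![ω2, -ω1, 0] (0 : Fin 3 → ℝ)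
  set v : Fin 6 → ℝ := Fin.append (0 : Fin 3 → ℝ) (mu • ![ω2, -ω1, 0])
  have hu : Stroh lam mu ω1 ω2 *ᵥ u = v := Stroh_mulVec_append_perp_zero hω
  have hv : Stroh lam mu ω1 ω2 *ᵥ v = -u := Stroh_mulVec_append_zero_perp hmu.ne' hlam
  have hq : (![(ω2 : ℂ), -(ω1 : ℂ), 0, -(Complex.I * mu * ω2), Complex.I * mu * ω1, 0] :
      Fin 6 → ℂ) = fun j => (u j : ℂ) + -Complex.I * v j := by
    funext j
    fin_cases j <;> simp [u, v, Fin.append, Fin.addCases, mul_assoc]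
  have hq_conj : (fun j => starRingEnd ℂ
      ((![(ω2 : ℂ), -(ω1 : ℂ), 0, -(Complex.I * mu * ω2), Complex.I * mu * ω1, 0] :
        Fin 6 → ℂ) j)) = fun j => (u j : ℂ) + Complex.I * v j := by
    rw [hq]
    funext j
    simp
  rw [hq_conj, hq]
  exact ⟨by simpa [Strohc] using map_ofReal_mulVec_add_smul hu hv (s := -Complex.I) (by simp),
    map_ofReal_mulVec_add_smul hu hv (by simp)⟩
end

section
/- Let λ, μ ∈ ℝ, let ω = (ω₁, ω₂, 0) be a unit vector, let v ∈ ℂ³, let d ≥ 1 be an integer, and set u(t) = t^d e^{−t} v for t > 0. Then for all t > 0, M₀ u''(t) + i M₁ u'(t) − M₂ u(t) = e^{−t} [ −t^d (λ+μ)(ω₁v₁ + ω₂v₂ + i v₃)(ω₁, ω₂, i) − d t^{d−1} (2M₀ − iM₁) v + d(d−1) t^{d−2} M₀ v ]; equivalently, (M₀ − iM₁ − M₂)v = −(λ+μ)(ω₁v₁ + ω₂v₂ + i v₃)(ω₁, ω₂, i) and the coefficients of t^{d−1} and t^{d−2} are −d(2M₀ − iM₁)v and d(d−1)M₀v respectively.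 -/
open Matrix

/-- For `u(t) = t^d e^{−t} v` one has, for all `t > 0`,
`M₀u'' + iM₁u' − M₂u = e^{−t}[ −t^d (λ+μ)(ω₁v₁+ω₂v₂+iv₃)(ω₁,ω₂,i) − d t^{d−1}(2M₀−iM₁)v
+ d(d−1) t^{d−2} M₀ v ]`; equivalently the top coefficient identity
`(M₀ − iM₁ − M₂)v = −(λ+μ)(ω₁v₁+ω₂v₂+iv₃)(ω₁,ω₂,i)` holds. -/
theorem stmt7 (lam mu ω1 ω2 : ℝ) (hω : ω1 ^ 2 + ω2 ^ 2 = 1) (v : Fin 3 → ℂ)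
    (d : ℕ) (hd : 1 ≤ d) (u : ℝ → Fin 3 → ℂ)
    (hu : u = fun t : ℝ => ((t : ℂ) ^ d * Complex.exp (-(t : ℂ))) • v) :
    (∀ t : ℝ, 0 < t →
      Mat0c lam mu *ᵥ deriv (deriv u) t
          + Complex.I • (Mat1c lam mu ω1 ω2 *ᵥ deriv u t)
          - Mat2c lam mu ω1 ω2 *ᵥ u t
        = Complex.exp (-(t : ℂ)) •
            ((-((t : ℂ) ^ d) * ((lam : ℂ) + mu) * ((ω1 : ℂ) * v 0 + (ω2 : ℂ) * v 1 + Complex.I * v 2)) •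
                (![(ω1 : ℂ), (ω2 : ℂ), Complex.I] : Fin 3 → ℂ)
              + (-((d : ℂ) * (t : ℂ) ^ (d - 1))) •
                  (((2 : ℂ) • Mat0c lam mu - Complex.I • Mat1c lam mu ω1 ω2) *ᵥ v)
              + ((d : ℂ) * ((d : ℂ) - 1) * (t : ℂ) ^ (d - 2)) • (Mat0c lam mu *ᵥ v))) ∧
    (Mat0c lam mu - Complex.I • Mat1c lam mu ω1 ω2 - Mat2c lam mu ω1 ω2) *ᵥ v
      = (-((lam : ℂ) + mu) * ((ω1 : ℂ) * v 0 + (ω2 : ℂ) * v 1 + Complex.I * v 2)) •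
          (![(ω1 : ℂ), (ω2 : ℂ), Complex.I] : Fin 3 → ℂ) := by
  have hc : (ω1:ℂ)^2 + (ω2:ℂ)^2 = 1 := by exact_mod_cast hω
  have key : ∀ i, (Mat0c lam mu *ᵥ v) i - Complex.I * (Mat1c lam mu ω1 ω2 *ᵥ v) i
        - (Mat2c lam mu ω1 ω2 *ᵥ v) i
      = (-((lam : ℂ) + mu) * ((ω1 : ℂ) * v 0 + (ω2 : ℂ) * v 1 + Complex.I * v 2)) *
          (![(ω1 : ℂ), (ω2 : ℂ), Complex.I] : Fin 3 → ℂ) i := by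
    intro i
    fin_cases i <;>
      simp [Mat0c, Mat1c, Mat2c, Mat0, Mat1, Mat2, bil, isoC, mulVec, dotProduct,
        Fin.sum_univ_succ, Matrix.map_apply] <;>
      ring_nf
    · linear_combination (-(mu:ℂ) * v 0) * hc
    · linear_combination (-(mu:ℂ) * v 1) * hc
    · linear_combination (-(mu:ℂ) * v 2) * hc + ((lam:ℂ)+mu) * v 2 * Complex.I_sq
  constructor
  · intro t ht
    have hf : ∀ s : ℝ, HasDerivAt (fun r : ℝ => ((r:ℂ)^d * Complex.exp (-(r:ℂ))))
        (((d:ℂ) * (s:ℂ)^(d-1) - (s:ℂ)^d) * Complex.exp (-(s:ℂ))) s := by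
      intro s
      have h : HasDerivAt (fun z : ℂ => z^d * Complex.exp (-z))
          ((d:ℂ) * (s:ℂ)^(d-1) * Complex.exp (-(s:ℂ)) + (s:ℂ)^d * (Complex.exp (-(s:ℂ)) * (-1))) (s:ℂ) :=
        (hasDerivAt_pow d _).mul ((hasDerivAt_neg _).cexp)
      have := h.comp_ofReal
      convert this using 1
      ring
    have hg : HasDerivAt (fun s : ℝ => (((d:ℂ) * (s:ℂ)^(d-1) - (s:ℂ)^d) * Complex.exp (-(s:ℂ))))
        (((d:ℂ) * ((d:ℂ)-1) * (t:ℂ)^(d-2) - 2*(d:ℂ)*(t:ℂ)^(d-1) + (t:ℂ)^d) * Complex.exp (-(t:ℂ))) t := by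
      have h : HasDerivAt (fun z : ℂ => ((d:ℂ) * z^(d-1) - z^d) * Complex.exp (-z))
          (((d:ℂ) * (((d-1:ℕ):ℂ) * (t:ℂ)^(d-1-1)) - (d:ℂ) * (t:ℂ)^(d-1)) * Complex.exp (-(t:ℂ))
            + ((d:ℂ) * (t:ℂ)^(d-1) - (t:ℂ)^d) * (Complex.exp (-(t:ℂ)) * (-1))) (t:ℂ) :=
        (((hasDerivAt_pow (d-1) _).const_mul (d:ℂ)).sub (hasDerivAt_pow d _)).mul
          ((hasDerivAt_neg _).cexp)
      have := h.comp_ofReal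
      convert this using 1
      have h1 : ((d-1:ℕ):ℂ) = (d:ℂ) - 1 := by push_cast [Nat.cast_sub hd]; ring
      have h2 : d - 1 - 1 = d - 2 := by omega
      rw [h1, h2]
      ring
    have hu1 : deriv u = fun s : ℝ =>
        (((d:ℂ) * (s:ℂ)^(d-1) - (s:ℂ)^d) * Complex.exp (-(s:ℂ))) • v := by
      funext s; rw [hu]; exact ((hf s).smul_const v).deriv
    have hu2 : deriv (deriv u) t =
        (((d:ℂ) * ((d:ℂ)-1) * (t:ℂ)^(d-2) - 2*(d:ℂ)*(t:ℂ)^(d-1) + (t:ℂ)^d) *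
          Complex.exp (-(t:ℂ))) • v := by
      rw [hu1]; exact (hg.smul_const v).deriv
    rw [hu2, hu1, hu]
    funext i
    simp only [Matrix.mulVec_smul, Matrix.sub_mulVec, Matrix.smul_mulVec,
      Pi.smul_apply, smul_eq_mul, Pi.add_apply, Pi.sub_apply]
    linear_combination (Complex.exp (-(t:ℂ)) * (t:ℂ)^d) * key i
  · funext i
    have := key i
    simp only [Matrix.sub_mulVec, Matrix.smul_mulVec, Pi.smul_apply, smul_eq_mul,
      Pi.sub_apply] at this ⊢
    linear_combination this
end

section
/- Let λ, μ ∈ ℝ satisfy μ > 0 and 3λ + 2μ > 0, and let ω = (ω₁, ω₂, 0) be a unit vector. Then for every Σ ∈ ℂ, det(Σ I₆ − K⁰) = (1 + Σ²)³, where I₆ is the 6×6 identity matrix. Consequently the eigenvalues of K⁰ are exactly i and −i, each with algebraic multiplicity 3. -/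
open Matrix

/-!
`K⁰` is the companion linearization of the quadratic pencil `z² M₀ + z M₁ + M₂`: multiplying
`z - K⁰` on the left by `diag(M₀, 1)` and clearing the top-left block gives
`det M₀ · det (z - K⁰) = det (z² M₀ + z M₁ + M₂)`. For the isotropic tensor the pencil is `⟨ξ, ξ⟩`
with `ξ = z e₃ + ω`, and `⟨ξ, ξ⟩ = μ (ξ ⬝ ξ) I + (λ + μ) ξ ξᵀ` has determinant
`μ² (λ + 2μ) (ξ ⬝ ξ)³`. As `det M₀ = μ² (λ + 2μ)` and `ξ ⬝ ξ = z² + 1`, the characteristic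
polynomial is `(X² + 1)³`.
-/

namespace Matrix

variable {n α : Type*} [Fintype n] [DecidableEq n] [CommRing α]

theorem det_fromBlocks_one₁₂ (A C D : Matrix n n α) :
    (fromBlocks A 1 C D).det = (D * A - C).det := by
  have hT : (fromBlocks 1 0 (1 - A) 1 : Matrix (n ⊕ n) (n ⊕ n) α).det = 1 := by simp
  have hprod : fromBlocks A 1 C D * fromBlocks 1 0 (1 - A) 1 =
      fromBlocks 1 1 (C + D - D * A) D := by
    simp only [fromBlocks_multiply, Matrix.mul_one, Matrix.one_mul, Matrix.mul_zero,
      Matrix.mul_sub, add_sub_cancel, zero_add]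
    congr 1; abel
  rw [← mul_one (fromBlocks A 1 C D).det, ← hT, ← det_mul, hprod, det_fromBlocks_one₁₁,
    Matrix.mul_one]
  congr 1; abel

theorem det_smul_one_add_vecMulVec (a : α) (u v : n → α) :
    (a • 1 + vecMulVec u v).det = a ^ Fintype.card n + (u ⬝ᵥ v) * a ^ (Fintype.card n - 1) := by
  rw [smul_one_eq_diagonal, ← sub_neg_eq_add, ← neg_vecMulVec, ← scalar_apply, ← eval_charpoly,
    charpoly_vecMulVec]
  simp

noncomputable def stroh (M₀ E W M₂ : Matrix n n α) : Matrix (n ⊕ n) (n ⊕ n) α :=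
  fromBlocks (-(M₀⁻¹ * E)) (-M₀⁻¹) (M₂ - W * M₀⁻¹ * E) (-(W * M₀⁻¹))

theorem det_mul_det_smul_one_sub_stroh {M₀ : Matrix n n α} (hM₀ : IsUnit M₀.det)
    (E W M₂ : Matrix n n α) (z : α) :
    M₀.det * (z • 1 - stroh M₀ E W M₂).det = (z ^ 2 • M₀ + z • (E + W) + M₂).det := by
  have hprod : fromBlocks M₀ 0 0 1 * (z • 1 - stroh M₀ E W M₂) =
      fromBlocks (z • M₀ + E) 1 (W * M₀⁻¹ * E - M₂) (z • 1 + W * M₀⁻¹) := by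
    rw [stroh, ← fromBlocks_one, fromBlocks_smul, sub_eq_add_neg, fromBlocks_neg, fromBlocks_add,
      fromBlocks_multiply]
    simp [Matrix.mul_add, mul_nonsing_inv _ hM₀, mul_nonsing_inv_cancel_left _ _ hM₀,
      sub_eq_add_neg]
  have hM₀blocks : (fromBlocks M₀ 0 0 1 : Matrix (n ⊕ n) (n ⊕ n) α).det = M₀.det := by simp
  rw [← hM₀blocks, ← det_mul, hprod, det_fromBlocks_one₁₂]
  congr 1
  simp only [Matrix.add_mul, Matrix.mul_add, Matrix.smul_mul, Matrix.mul_smul, Matrix.one_mul,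
    Matrix.mul_assoc, nonsing_inv_mul _ hM₀, Matrix.mul_one]
  module

end Matrix

theorem bil_eq (lam mu : ℝ) (ξ ζ : Fin 3 → ℝ) :
    bil lam mu ξ ζ = lam • vecMulVec ξ ζ + mu • ((ξ ⬝ᵥ ζ) • 1 + vecMulVec ζ ξ) := by
  ext i k
  fin_cases i <;> fin_cases k <;>
    simp [bil, isoC, vecMulVec_apply, dotProduct, one_apply, Fin.sum_univ_three] <;> ring

theorem bil_smul_add_self (lam mu t : ℝ) (ξ ζ : Fin 3 → ℝ) :
    bil lam mu (t • ξ + ζ) (t • ξ + ζ) =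
      t ^ 2 • bil lam mu ξ ξ + t • (bil lam mu ξ ζ + bil lam mu ζ ξ) + bil lam mu ζ ζ := by
  simp only [bil_eq, vecMulVec_add, add_vecMulVec, smul_vecMulVec, vecMulVec_smul,
    dotProduct_add, add_dotProduct, smul_dotProduct, dotProduct_smul, smul_eq_mul,
    dotProduct_comm ζ ξ]
  module

theorem bil_self (lam mu : ℝ) (ξ : Fin 3 → ℝ) :
    bil lam mu ξ ξ = (mu * (ξ ⬝ᵥ ξ)) • 1 + (lam + mu) • vecMulVec ξ ξ := by
  rw [bil_eq]; module

theorem det_bil_self (lam mu : ℝ) (ξ : Fin 3 → ℝ) :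
    (bil lam mu ξ ξ).det = mu ^ 2 * (lam + 2 * mu) * (ξ ⬝ᵥ ξ) ^ 3 := by
  rw [bil_self, ← smul_vecMulVec, det_smul_one_add_vecMulVec]
  simp only [Fintype.card_fin, smul_dotProduct, smul_eq_mul]
  ring

theorem det_Mat0 (lam mu : ℝ) : (Mat0 lam mu).det = mu ^ 2 * (lam + 2 * mu) := by
  simp [Mat0, det_bil_self, dotProduct, Fin.sum_univ_three]

theorem Stroh_eq_reindex_stroh (lam mu ω1 ω2 : ℝ) :
    Stroh lam mu ω1 ω2 = reindex finSumFinEquiv finSumFinEquiv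
      (stroh (Mat0 lam mu) (E3w lam mu ω1 ω2) (wE3 lam mu ω1 ω2) (Mat2 lam mu ω1 ω2)) :=
  rfl

theorem charpoly_Stroh {lam mu : ℝ} (hmu : mu ≠ 0) (hlam : lam + 2 * mu ≠ 0) {ω1 ω2 : ℝ}
    (hω : ω1 ^ 2 + ω2 ^ 2 = 1) :
    (Stroh lam mu ω1 ω2).charpoly = (Polynomial.X ^ 2 + 1) ^ 3 := by
  have hdet₀ : (Mat0 lam mu).det ≠ 0 := by rw [det_Mat0]; positivity
  refine Polynomial.funext fun t => mul_left_cancel₀ hdet₀ ?_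
  set ξ : Fin 3 → ℝ := t • ![0, 0, 1] + ![ω1, ω2, 0]
  have hpencil : t ^ 2 • Mat0 lam mu + t • (E3w lam mu ω1 ω2 + wE3 lam mu ω1 ω2) +
      Mat2 lam mu ω1 ω2 = bil lam mu ξ ξ :=
    (bil_smul_add_self lam mu t _ _).symm
  have hnorm : ξ ⬝ᵥ ξ = t ^ 2 + 1 := by
    simp only [ξ, dotProduct, Fin.sum_univ_three, Pi.add_apply, smul_cons, smul_eq_mul,
      smul_empty, cons_val_zero, cons_val_one, cons_val, mul_zero, mul_one, zero_add, add_zero]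
    linear_combination hω
  rw [Stroh_eq_reindex_stroh, charpoly_reindex, eval_charpoly, scalar_apply,
    ← smul_one_eq_diagonal, det_mul_det_smul_one_sub_stroh hdet₀.isUnit, hpencil, det_bil_self,
    det_Mat0, hnorm]
  simp

theorem Complex.one_add_sq_eq_zero_iff (z : ℂ) : 1 + z ^ 2 = 0 ↔ z = I ∨ z = -I := by
  have hfactor : 1 + z ^ 2 = (z - I) * (z + I) := by ring_nf; rw [I_sq]; ring
  rw [hfactor, mul_eq_zero, sub_eq_zero, add_eq_zero_iff_eq_neg]

/-- `det(Σ I₆ − K⁰) = (1 + Σ²)³` for all `Σ ∈ ℂ`; the characteristic polynomial of `K⁰`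
is `(X² + 1)³` and the eigenvalues of `K⁰` are exactly `i` and `−i`, each with algebraic
multiplicity `3`. -/
theorem stmt10 (lam mu ω1 ω2 : ℝ) (hmu : 0 < mu) (hconv : 0 < 3 * lam + 2 * mu)
    (hω : ω1 ^ 2 + ω2 ^ 2 = 1) :
    (∀ z : ℂ,
        Matrix.det (z • (1 : Matrix (Fin 6) (Fin 6) ℂ) - Strohc lam mu ω1 ω2)
          = (1 + z ^ 2) ^ 3) ∧
      Matrix.charpoly (Strohc lam mu ω1 ω2) = (Polynomial.X ^ 2 + 1) ^ 3 ∧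
      ∀ z : ℂ,
        Matrix.det (z • (1 : Matrix (Fin 6) (Fin 6) ℂ) - Strohc lam mu ω1 ω2) = 0 ↔
          z = Complex.I ∨ z = -Complex.I := by
  have hlam : lam + 2 * mu ≠ 0 := by linarith
  have hchar : (Strohc lam mu ω1 ω2).charpoly = (Polynomial.X ^ 2 + 1) ^ 3 := by
    refine (charpoly_map (Stroh lam mu ω1 ω2) Complex.ofRealHom).trans ?_
    rw [charpoly_Stroh hmu.ne' hlam hω]
    simp
  have hdet (z : ℂ) : (z • (1 : Matrix (Fin 6) (Fin 6) ℂ) - Strohc lam mu ω1 ω2).det =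
      (1 + z ^ 2) ^ 3 := by
    rw [smul_one_eq_diagonal, ← scalar_apply, ← eval_charpoly, hchar]
    simp [add_comm]
  refine ⟨hdet, hchar, fun z => ?_⟩
  rw [hdet, pow_eq_zero_iff three_ne_zero, Complex.one_add_sq_eq_zero_iff]
end

section
/- Let λ, μ ∈ ℝ satisfy μ > 0 and 3λ + 2μ > 0, and let (ω₁, ω₂) ∈ ℝ² be a unit vector. Set σ₁ = (ω₂, −ω₁, 0), σ₂ = (ω₁, ω₂, i), σ₃ = (0, 0, −(λ+3μ)/(λ+μ)). For arbitrary c₁, c₂, c₃ ∈ ℂ put a = c₁σ₁ + c₂σ₂ + c₃σ₃ and define u(t) = e^{−t}(a + i c₃ t σ₂) for t ≥ 0. Then u is bounded on [0,∞), u(0) = a, and u satisfies M₀ u'' + i M₁ u' − M₂ u = 0 on (0,∞). In particular, for every a ∈ ℂ³ there exists a bounded C^∞ solution on [0,∞) of this second-order system with initial value a. -/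
open Matrix

/-!
At `s = -1` the quadratic pencil `P(s) = s² M₀ + i s M₁ − M₂` annihilates `σ₁` and `σ₂`, and
`σ₃` completes `σ₂` to a Jordan chain: `P(-1) σ₃ + P'(-1) (i σ₂) = 0` with `P'(-1) = i M₁ − 2 M₀`.
For an exponential polynomial `u(t) = e^{-t} (a + t b)` the system reduces to
`P(-1) b = 0` and `P(-1) a + P'(-1) b = 0`, which for `a = Σ cₖ σₖ` and `b = i c₃ σ₂` hold by
linearity. Boundedness on `[0, ∞)` comes from `t e^{-t} ≤ 1`, and since `σ₁, σ₂, σ₃` span `ℂ³`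
when `λ + μ` and `λ + 3μ` do not vanish, every initial value is attained.
-/

section ExpPoly

variable {E : Type*} [NormedAddCommGroup E] [NormedSpace ℂ E]

noncomputable def expPoly (a b : E) (t : ℝ) : E := Complex.exp (-(t : ℂ)) • (a + (t : ℂ) • b)

lemma expPoly_zero (a b : E) : expPoly a b 0 = a := by
  simp [expPoly]

lemma hasDerivAt_expPoly (a b : E) (t : ℝ) :
    HasDerivAt (expPoly a b) (expPoly (b - a) (-b) t) t := by
  have hexp : HasDerivAt (fun s : ℝ => Complex.exp (-(s : ℂ))) (-Complex.exp (-(t : ℂ))) t := by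
    simpa using (hasDerivAt_id t).ofReal_comp.neg.cexp
  have hlin : HasDerivAt (fun s : ℝ => a + (s : ℂ) • b) b t := by
    simpa using ((hasDerivAt_id t).ofReal_comp.smul_const b).const_add a
  convert hexp.smul hlin using 1
  · rfl
  · simp only [expPoly]
    module

lemma deriv_expPoly (a b : E) : deriv (expPoly a b) = expPoly (b - a) (-b) :=
  funext fun t => (hasDerivAt_expPoly a b t).deriv

lemma contDiff_expPoly (a b : E) : ContDiff ℝ (⊤ : ℕ∞) (expPoly a b) := by
  have hofReal : ContDiff ℝ (⊤ : ℕ∞) fun s : ℝ => (s : ℂ) := Complex.ofRealCLM.contDiff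
  exact ((Complex.contDiff_exp (𝕜 := ℝ)).comp hofReal.neg).smul
    (contDiff_const.add (hofReal.smul contDiff_const))

lemma norm_expPoly_le (a b : E) {t : ℝ} (ht : 0 ≤ t) : ‖expPoly a b t‖ ≤ ‖a‖ + ‖b‖ := by
  have hexp : ‖Complex.exp (-(t : ℂ))‖ = Real.exp (-t) := by
    rw [Complex.norm_exp]; simp
  have hdecay : Real.exp (-t) * t ≤ 1 := by
    rw [Real.exp_neg, inv_mul_le_iff₀ (Real.exp_pos t)]
    linarith [Real.add_one_le_exp t]
  have hle_one : Real.exp (-t) ≤ 1 := Real.exp_le_one_iff.mpr (by linarith)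
  calc ‖expPoly a b t‖ ≤ Real.exp (-t) * (‖a‖ + t * ‖b‖) := by
        rw [expPoly, norm_smul, hexp]
        gcongr
        refine (norm_add_le _ _).trans_eq ?_
        rw [norm_smul, Complex.norm_real, Real.norm_of_nonneg ht]
    _ = Real.exp (-t) * ‖a‖ + (Real.exp (-t) * t) * ‖b‖ := by ring
    _ ≤ 1 * ‖a‖ + 1 * ‖b‖ := by gcongr
    _ = ‖a‖ + ‖b‖ := by ring

end ExpPoly

lemma expPoly_solves_pencil {n : Type*} [Fintype n] (M0 M1 M2 : Matrix n n ℂ) {a b : n → ℂ}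
    (hb : (M0 - Complex.I • M1 - M2) *ᵥ b = 0)
    (hab : (M0 - Complex.I • M1 - M2) *ᵥ a + (Complex.I • M1 - 2 • M0) *ᵥ b = 0) (t : ℝ) :
    M0 *ᵥ deriv (deriv (expPoly a b)) t + Complex.I • (M1 *ᵥ deriv (expPoly a b) t)
      - M2 *ᵥ expPoly a b t = 0 := by
  simp only [sub_mulVec, smul_mulVec] at hb hab
  simp only [deriv_expPoly, expPoly, mulVec_smul, mulVec_add, mulVec_sub, mulVec_neg]
  linear_combination (norm := module)
    (Complex.exp (-(t : ℂ)) * t) • hb + Complex.exp (-(t : ℂ)) • hab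

section Elasticity

variable (lam mu ω1 ω2 : ℝ)

def sigma1 : Fin 3 → ℂ := ![(ω2 : ℂ), -(ω1 : ℂ), 0]

def sigma2 : Fin 3 → ℂ := ![(ω1 : ℂ), (ω2 : ℂ), Complex.I]

noncomputable def sigma3 : Fin 3 → ℂ := ![0, 0, -(((lam : ℂ) + 3 * mu) / ((lam : ℂ) + mu))]

lemma Mat0c_eq : Mat0c lam mu = !![(mu : ℂ), 0, 0; 0, (mu : ℂ), 0; 0, 0, (lam : ℂ) + 2 * mu] := by
  ext i j
  fin_cases i <;> fin_cases j <;>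
    simp [Mat0c, Mat0, bil, isoC, Fin.sum_univ_succ, ← two_mul, mul_comm]

lemma Mat1c_eq : Mat1c lam mu ω1 ω2 =
    !![0, 0, ((lam : ℂ) + mu) * ω1; 0, 0, ((lam : ℂ) + mu) * ω2;
      ((lam : ℂ) + mu) * ω1, ((lam : ℂ) + mu) * ω2, 0] := by
  ext i j
  fin_cases i <;> fin_cases j <;>
    simp [Mat1c, Mat1, bil, isoC, Fin.sum_univ_succ] <;> ring

variable {ω1 ω2} (hω : ω1 ^ 2 + ω2 ^ 2 = 1)
include hω

lemma Mat2c_eq : Mat2c lam mu ω1 ω2 =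
    !![(mu : ℂ) + ((lam : ℂ) + mu) * ω1 ^ 2, ((lam : ℂ) + mu) * ω1 * ω2, 0;
      ((lam : ℂ) + mu) * ω1 * ω2, (mu : ℂ) + ((lam : ℂ) + mu) * ω2 ^ 2, 0;
      0, 0, (mu : ℂ)] := by
  have hω' : (ω1 : ℂ) ^ 2 + (ω2 : ℂ) ^ 2 = 1 := by exact_mod_cast hω
  ext i j
  fin_cases i <;> fin_cases j <;>
    simp [Mat2c, Mat2, bil, isoC, Fin.sum_univ_succ] <;>
    first
      | ring1
      | linear_combination (mu : ℂ) * hω'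

lemma pencil_mulVec_sigma1 :
    (Mat0c lam mu - Complex.I • Mat1c lam mu ω1 ω2 - Mat2c lam mu ω1 ω2) *ᵥ sigma1 ω1 ω2 = 0 := by
  rw [Mat0c_eq, Mat1c_eq, Mat2c_eq lam mu hω]
  ext i
  fin_cases i <;> simp [sigma1] <;> ring

lemma pencil_mulVec_sigma2 :
    (Mat0c lam mu - Complex.I • Mat1c lam mu ω1 ω2 - Mat2c lam mu ω1 ω2) *ᵥ sigma2 ω1 ω2 = 0 := by
  have hω' : (ω1 : ℂ) ^ 2 + (ω2 : ℂ) ^ 2 = 1 := by exact_mod_cast hω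
  rw [Mat0c_eq, Mat1c_eq, Mat2c_eq lam mu hω]
  ext i
  fin_cases i <;> simp [sigma2]
  · linear_combination -((lam : ℂ) + mu) * ω1 * (hω' + Complex.I_sq)
  · linear_combination -((lam : ℂ) + mu) * ω2 * (hω' + Complex.I_sq)
  · linear_combination -((lam : ℂ) + mu) * Complex.I * hω'

lemma pencil_mulVec_sigma3 (hlm : lam + mu ≠ 0) :
    (Mat0c lam mu - Complex.I • Mat1c lam mu ω1 ω2 - Mat2c lam mu ω1 ω2) *ᵥ sigma3 lam mu
      + Complex.I • ((Complex.I • Mat1c lam mu ω1 ω2 - 2 • Mat0c lam mu) *ᵥ sigma2 ω1 ω2) = 0 := by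
  have hω' : (ω1 : ℂ) ^ 2 + (ω2 : ℂ) ^ 2 = 1 := by exact_mod_cast hω
  have hlm' : (lam : ℂ) + mu ≠ 0 := by exact_mod_cast hlm
  rw [Mat0c_eq, Mat1c_eq, Mat2c_eq lam mu hω]
  ext i
  fin_cases i <;> simp [sigma2, sigma3] <;> field_simp
  · linear_combination Complex.I * ω1 * ((lam : ℂ) + mu) * Complex.I_sq
  · linear_combination Complex.I * ω2 * ((lam : ℂ) + mu) * Complex.I_sq
  · linear_combination ((lam : ℂ) + mu) ^ 2 * Complex.I ^ 2 * hω'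
      - ((lam : ℂ) + mu) * (lam + 3 * mu) * Complex.I_sq

variable {lam mu}

lemma expPoly_sigma_solves (hlm : lam + mu ≠ 0) {c1 c2 c3 : ℂ} {a : Fin 3 → ℂ}
    (ha : a = c1 • sigma1 ω1 ω2 + c2 • sigma2 ω1 ω2 + c3 • sigma3 lam mu) (t : ℝ) :
    Mat0c lam mu *ᵥ deriv (deriv (expPoly a ((Complex.I * c3) • sigma2 ω1 ω2))) t
      + Complex.I • (Mat1c lam mu ω1 ω2 *ᵥ deriv (expPoly a ((Complex.I * c3) • sigma2 ω1 ω2)) t)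
      - Mat2c lam mu ω1 ω2 *ᵥ expPoly a ((Complex.I * c3) • sigma2 ω1 ω2) t = 0 := by
  have h1 := pencil_mulVec_sigma1 lam mu hω
  have h2 := pencil_mulVec_sigma2 lam mu hω
  have h3 := pencil_mulVec_sigma3 lam mu hω hlm
  refine expPoly_solves_pencil _ _ _ ?_ ?_ t
  · rw [mulVec_smul, h2, smul_zero]
  · simp only [ha, mulVec_add, mulVec_smul]
    linear_combination (norm := module) c1 • h1 + c2 • h2 + c3 • h3

lemma exists_eq_sigma_combination (hlm : lam + mu ≠ 0) (hlm3 : lam + 3 * mu ≠ 0)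
    (b : Fin 3 → ℂ) :
    ∃ c1 c2 c3 : ℂ, b = c1 • sigma1 ω1 ω2 + c2 • sigma2 ω1 ω2 + c3 • sigma3 lam mu := by
  have hω' : (ω1 : ℂ) ^ 2 + (ω2 : ℂ) ^ 2 = 1 := by exact_mod_cast hω
  have hlm' : (lam : ℂ) + mu ≠ 0 := by exact_mod_cast hlm
  have hlm3' : (lam : ℂ) + 3 * mu ≠ 0 := by exact_mod_cast hlm3
  set c2 : ℂ := ω1 * b 0 + ω2 * b 1
  refine ⟨ω2 * b 0 - ω1 * b 1, c2, (Complex.I * c2 - b 2) * ((lam + mu) / (lam + 3 * mu)), ?_⟩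
  ext i
  fin_cases i <;> simp [sigma1, sigma2, sigma3, c2]
  · linear_combination -(b 0) * hω'
  · linear_combination -(b 1) * hω'
  · have hκ : ((lam : ℂ) + mu) / (lam + 3 * mu) * ((lam + 3 * mu) / (lam + mu)) = 1 := by
      rw [div_mul_div_cancel₀ hlm3', div_self hlm']
    linear_combination (Complex.I * c2 - b 2) * hκ

end Elasticity

/-- With `a = c₁σ₁ + c₂σ₂ + c₃σ₃` and `u(t) = e^{−t}(a + i c₃ t σ₂)`, the function `u` is
bounded on `[0,∞)`, `u(0) = a`, and `u` solves `M₀u'' + iM₁u' − M₂u = 0` on `(0,∞)`.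
In particular, for every `a ∈ ℂ³` there is a bounded `C^∞` solution on `[0,∞)` of this
system with initial value `a`. -/
theorem stmt11 (lam mu ω1 ω2 : ℝ) (hmu : 0 < mu) (hconv : 0 < 3 * lam + 2 * mu)
    (hω : ω1 ^ 2 + ω2 ^ 2 = 1) (c1 c2 c3 : ℂ) (a : Fin 3 → ℂ)
    (ha : a = c1 • (![(ω2 : ℂ), -(ω1 : ℂ), 0] : Fin 3 → ℂ)
        + c2 • (![(ω1 : ℂ), (ω2 : ℂ), Complex.I] : Fin 3 → ℂ)
        + c3 • (![0, 0, -(((lam : ℂ) + 3 * mu) / ((lam : ℂ) + mu))] : Fin 3 → ℂ))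
    (u : ℝ → Fin 3 → ℂ)
    (hu : u = fun t : ℝ => Complex.exp (-(t : ℂ)) •
        (a + (Complex.I * c3 * (t : ℂ)) • (![(ω1 : ℂ), (ω2 : ℂ), Complex.I] : Fin 3 → ℂ))) :
    (∃ C : ℝ, ∀ t : ℝ, 0 ≤ t → ‖u t‖ ≤ C) ∧
      u 0 = a ∧
      (∀ t : ℝ, 0 < t →
        Mat0c lam mu *ᵥ deriv (deriv u) t
            + Complex.I • (Mat1c lam mu ω1 ω2 *ᵥ deriv u t)
            - Mat2c lam mu ω1 ω2 *ᵥ u t = 0) ∧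
      ∀ b : Fin 3 → ℂ, ∃ w : ℝ → Fin 3 → ℂ,
        ContDiffOn ℝ (⊤ : ℕ∞) w (Set.Ici (0 : ℝ)) ∧
          (∃ C : ℝ, ∀ t : ℝ, 0 ≤ t → ‖w t‖ ≤ C) ∧
          w 0 = b ∧
          ∀ t : ℝ, 0 < t →
            Mat0c lam mu *ᵥ deriv (deriv w) t
                + Complex.I • (Mat1c lam mu ω1 ω2 *ᵥ deriv w t)
                - Mat2c lam mu ω1 ω2 *ᵥ w t = 0 := by
  have hlm : lam + mu ≠ 0 := (by linarith : 0 < lam + mu).ne'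
  have hlm3 : lam + 3 * mu ≠ 0 := (by linarith : 0 < lam + 3 * mu).ne'
  have hu' : u = expPoly a ((Complex.I * c3) • sigma2 ω1 ω2) := by
    funext t
    simp only [hu, expPoly, sigma2, smul_smul, mul_comm]
  subst hu'
  refine ⟨⟨_, fun t ht => norm_expPoly_le _ _ ht⟩, expPoly_zero _ _,
    fun t _ => expPoly_sigma_solves hω hlm ha t, fun b => ?_⟩
  obtain ⟨d1, d2, d3, hb⟩ := exists_eq_sigma_combination hω hlm hlm3 b
  exact ⟨_, (contDiff_expPoly _ _).contDiffOn, ⟨_, fun t ht => norm_expPoly_le _ _ ht⟩,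
    expPoly_zero _ _, fun t _ => expPoly_sigma_solves hω hlm hb t⟩
end

section
/- Fix ρ ∈ (0,1), a unit vector ω' = (ω₁, ω₂) ∈ ℝ², q ∈ C_c^∞(ℝ²) with supp q ⊂ {|z'| < 1}, and integers d ≥ 0 and b ≥ 0. For N ≥ 1 define W_N(y) := e^{iN(y₁ω₁ + y₂ω₂)} e^{−N y₃} (N y₃)^d q(N^{1−ρ} y₁, N^{1−ρ} y₂). Then there exists a constant C > 0, independent of N, such that for every N ≥ 1 and every l ∈ {1,2,3}, ( ∫_{Ω_N} y₃^{2b} |∂W_N/∂y_l (y)|² dy )^{1/2} ≤ C N^{−1/2 + ρ − b}. -/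
/-!
Write `W_N = e^{iNφ} · P · Q` with `φ(y) = y₁ω₁ + y₂ω₂`, `P(y) = e^{-Ny₃}(Ny₃)^d` and
`Q(y) = q(N^{1-ρ}y')`. The product rule gives `|∇W_N| ≤ N e^{-t}(c₁tᵈ + c₂tᵈ⁻¹)` with `t = Ny₃`:
each factor contributes at most one power of `N` (for `Q` because `N^{1-ρ} ≤ N`). Substituting
`y₃ = t/N`, the weight `y₃^{2b}` costs `N^{-2b}` and `tᵐe^{-t} ≤ m!` absorbs every power of `t`,
so `y₃^{2b}|∇W_N|² ≤ K N^{2-2b} e^{-Ny₃}`. By Fubini, `∫_{Ω_N} e^{-Ny₃} ≤ (2N^{ρ-1})²/N`, and the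
square root of the product is `2√K N^{-1/2+ρ-b}`.
-/

open MeasureTheory

/-- The slab `Ω_N = {y : |y₁| ≤ N^{ρ−1}, |y₂| ≤ N^{ρ−1}, 0 ≤ y₃ ≤ N^{−1/2}}`. -/
def slab (ρ : ℝ) (N : ℕ) : Set (Fin 3 → ℝ) :=
  {y : Fin 3 → ℝ | |y 0| ≤ (N : ℝ) ^ (ρ - 1) ∧ |y 1| ≤ (N : ℝ) ^ (ρ - 1) ∧
    0 ≤ y 2 ∧ y 2 ≤ (N : ℝ) ^ (-(1 : ℝ) / 2)}

section FDerivBounds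

variable {E : Type*} [NormedAddCommGroup E] [NormedSpace ℝ E] {x : E}

theorem norm_fderiv_mul_le {𝕜 : Type*} [NormedField 𝕜] [NormedAlgebra ℝ 𝕜] {f g : E → 𝕜}
    (hf : DifferentiableAt ℝ f x) (hg : DifferentiableAt ℝ g x) :
    ‖fderiv ℝ (fun y => f y * g y) x‖ ≤ ‖f x‖ * ‖fderiv ℝ g x‖ + ‖g x‖ * ‖fderiv ℝ f x‖ := by
  rw [fderiv_fun_mul hf hg]
  exact (norm_add_le _ _).trans
    (add_le_add (norm_smul_le (f x) (fderiv ℝ g x)) (norm_smul_le (g x) (fderiv ℝ f x)))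

theorem norm_fderiv_ofReal_le {f : E → ℝ} (hf : DifferentiableAt ℝ f x) :
    ‖fderiv ℝ (fun y => (f y : ℂ)) x‖ ≤ ‖fderiv ℝ f x‖ := by
  have h : HasFDerivAt (fun y => (f y : ℂ)) (Complex.ofRealCLM.comp (fderiv ℝ f x)) x :=
    Complex.ofRealCLM.hasFDerivAt.comp x hf.hasFDerivAt
  rw [h.fderiv]
  exact (Complex.ofRealCLM.opNorm_comp_le _).trans (by rw [Complex.ofRealCLM_norm, one_mul])

theorem norm_fderiv_cexp_ofReal_mul_I_le {φ : E → ℝ} (hφ : DifferentiableAt ℝ φ x) :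
    ‖fderiv ℝ (fun y => Complex.exp (φ y * Complex.I)) x‖ ≤ ‖fderiv ℝ φ x‖ := by
  have hφ' : DifferentiableAt ℝ (fun y => (φ y : ℂ)) x :=
    Complex.ofRealCLM.differentiableAt.comp x hφ
  rw [(hφ'.mul_const Complex.I).hasFDerivAt.cexp.fderiv, fderiv_mul_const hφ',
    norm_smul, norm_smul, Complex.norm_exp_ofReal_mul_I, Complex.norm_I, one_mul, one_mul]
  exact norm_fderiv_ofReal_le hφ

theorem norm_fderiv_cexp_ofReal_mul_I_mul_le {φ f g : E → ℝ} (hφ : DifferentiableAt ℝ φ x)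
    (hf : DifferentiableAt ℝ f x) (hg : DifferentiableAt ℝ g x) :
    ‖fderiv ℝ (fun y => Complex.exp (φ y * Complex.I) * (f y * g y : ℝ)) x‖ ≤
      |f x| * ‖fderiv ℝ g x‖ + |g x| * ‖fderiv ℝ f x‖ + |f x| * |g x| * ‖fderiv ℝ φ x‖ := by
  have hfg := hf.mul hg
  have hexp : DifferentiableAt ℝ (fun y => Complex.exp (φ y * Complex.I)) x :=
    ((Complex.ofRealCLM.differentiableAt.comp x hφ).mul_const _).cexp
  calc _ ≤ ‖Complex.exp (φ x * Complex.I)‖ * ‖fderiv ℝ (fun y => ((f y * g y : ℝ) : ℂ)) x‖ +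
        ‖((f x * g x : ℝ) : ℂ)‖ * ‖fderiv ℝ (fun y => Complex.exp (φ y * Complex.I)) x‖ :=
        norm_fderiv_mul_le hexp (Complex.ofRealCLM.differentiableAt.comp x hfg)
    _ ≤ 1 * ‖fderiv ℝ (fun y => f y * g y) x‖ + |f x| * |g x| * ‖fderiv ℝ φ x‖ := by
        rw [Complex.norm_exp_ofReal_mul_I, Complex.norm_real, Real.norm_eq_abs, abs_mul]
        gcongr
        exacts [norm_fderiv_ofReal_le hfg, norm_fderiv_cexp_ofReal_mul_I_le hφ]
    _ ≤ _ := by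
        rw [one_mul, add_le_add_iff_right]
        simpa only [Real.norm_eq_abs] using norm_fderiv_mul_le hf hg

end FDerivBounds

theorem norm_fderiv_comp_apply_le {ι F : Type*} [Fintype ι] [NormedAddCommGroup F]
    [NormedSpace ℝ F] {p : ℝ → F} {p' : F} {x : ι → ℝ} (k : ι) (hp : HasDerivAt p p' (x k)) :
    ‖fderiv ℝ (fun y => p (y k)) x‖ ≤ ‖p'‖ := by
  have h : HasFDerivAt (fun y => p (y k)) _ x :=
    HasFDerivAt.comp (f := fun y : ι → ℝ => y k) x hp.hasFDerivAt (hasFDerivAt_apply k x)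
  rw [h.fderiv]
  refine ContinuousLinearMap.opNorm_le_bound _ (norm_nonneg _) fun v => ?_
  simp only [ContinuousLinearMap.comp_apply, ContinuousLinearMap.proj_apply,
    ContinuousLinearMap.toSpanSingleton_apply, norm_smul]
  rw [mul_comm]
  exact mul_le_mul_of_nonneg_left (norm_le_pi_norm v k) (norm_nonneg _)

theorem norm_fderiv_exp_neg_mul_mul_pow_le {ι : Type*} [Fintype ι] {n : ℝ} (hn : 0 ≤ n) (d : ℕ)
    (k : ι) {x : ι → ℝ} (hx : 0 ≤ x k) :
    ‖fderiv ℝ (fun y : ι → ℝ => Real.exp (-n * y k) * (n * y k) ^ d) x‖ ≤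
      n * Real.exp (-(n * x k)) * ((n * x k) ^ d + d * (n * x k) ^ (d - 1)) := by
  have hlin (c : ℝ) : HasDerivAt (fun s => c * s) c (x k) := by
    simpa using (hasDerivAt_id (x k)).const_mul c
  refine (norm_fderiv_comp_apply_le k ((hlin (-n)).exp.mul ((hlin n).pow d))).trans ?_
  have ht : 0 ≤ n * x k := mul_nonneg hn hx
  rw [Real.norm_eq_abs, neg_mul, Pi.pow_apply]
  refine (abs_add_le _ _).trans (le_of_eq ?_)
  have hdt : 0 ≤ d * (n * x k) ^ (d - 1) := by positivity
  rw [abs_mul, abs_mul, abs_mul, abs_mul, abs_neg, abs_of_nonneg hn, abs_of_pos (Real.exp_pos _),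
    abs_of_nonneg (pow_nonneg ht _), abs_of_nonneg hdt]
  ring

theorem norm_fderiv_mul_dotProduct_le (n ω1 ω2 : ℝ) (x : Fin 3 → ℝ) :
    ‖fderiv ℝ (fun y : Fin 3 → ℝ => n * (y 0 * ω1 + y 1 * ω2)) x‖ ≤ |n| * (|ω1| + |ω2|) := by
  refine norm_fderiv_le_of_lip' ℝ (by positivity) (Filter.Eventually.of_forall fun y => ?_)
  have h0 := norm_le_pi_norm (y - x) 0
  have h1 := norm_le_pi_norm (y - x) 1
  simp only [Pi.sub_apply, Real.norm_eq_abs] at h0 h1 ⊢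
  calc |n * (y 0 * ω1 + y 1 * ω2) - n * (x 0 * ω1 + x 1 * ω2)|
      = |n| * |(y 0 - x 0) * ω1 + (y 1 - x 1) * ω2| := by rw [← abs_mul]; ring_nf
    _ ≤ |n| * (|y 0 - x 0| * |ω1| + |y 1 - x 1| * |ω2|) := by
        gcongr
        exact (abs_add_le _ _).trans_eq (by rw [abs_mul, abs_mul])
    _ ≤ |n| * (|ω1| + |ω2|) * ‖y - x‖ := by
        rw [mul_assoc]
        gcongr
        nlinarith [abs_nonneg ω1, abs_nonneg ω2]

theorem norm_fderiv_comp_smul_pair_le {q : (Fin 2 → ℝ) → ℝ} {M c : ℝ} (hq : Differentiable ℝ q)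
    (hM : ∀ z, ‖fderiv ℝ q z‖ ≤ M) (hc : 0 ≤ c) (x : Fin 3 → ℝ) :
    ‖fderiv ℝ (fun y : Fin 3 → ℝ => q (fun i => c * ![y 0, y 1] i)) x‖ ≤ M * c := by
  have hM0 : 0 ≤ M := (norm_nonneg _).trans (hM 0)
  refine norm_fderiv_le_of_lip' ℝ (by positivity) (Filter.Eventually.of_forall fun y => ?_)
  have hpair : ‖(fun i => c * ![y 0, y 1] i) - fun i => c * ![x 0, x 1] i‖ ≤ c * ‖y - x‖ := by
    refine (pi_norm_le_iff_of_nonneg (by positivity)).2 fun i => ?_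
    fin_cases i <;>
    · simp only [Pi.sub_apply, Real.norm_eq_abs, ← mul_sub, abs_mul, abs_of_nonneg hc]
      gcongr
      exact norm_le_pi_norm (y - x) _
  calc _ ≤ M * ‖(fun i => c * ![y 0, y 1] i) - fun i => c * ![x 0, x 1] i‖ :=
        convex_univ.norm_image_sub_le_of_norm_fderiv_le (fun z _ => hq z) (fun z _ => hM z)
          trivial trivial
    _ ≤ M * c * ‖y - x‖ := by rw [mul_assoc]; gcongr

theorem norm_fderiv_profile_le {ρ ω1 ω2 n M₀ M₁ : ℝ} {q : (Fin 2 → ℝ) → ℝ} (d : ℕ)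
    (hq : Differentiable ℝ q) (hM₀ : ∀ z, |q z| ≤ M₀) (hM₁ : ∀ z, ‖fderiv ℝ q z‖ ≤ M₁)
    (hρ : 0 ≤ ρ) (hn : 1 ≤ n) {x : Fin 3 → ℝ} (hx : 0 ≤ x 2) :
    ‖fderiv ℝ (fun y : Fin 3 → ℝ =>
        Complex.exp (Complex.I * n * (y 0 * ω1 + y 1 * ω2)) * Real.exp (-n * y 2) *
          ((n * y 2) ^ d : ℝ) * q (fun i => n ^ (1 - ρ) * ![y 0, y 1] i)) x‖ ≤
      n * Real.exp (-(n * x 2)) *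
        ((M₀ * (|ω1| + |ω2| + 1) + M₁) * (n * x 2) ^ d + d * M₀ * (n * x 2) ^ (d - 1)) := by
  set φ : (Fin 3 → ℝ) → ℝ := fun y => n * (y 0 * ω1 + y 1 * ω2)
  set P : (Fin 3 → ℝ) → ℝ := fun y => Real.exp (-n * y 2) * (n * y 2) ^ d
  set Q : (Fin 3 → ℝ) → ℝ := fun y => q (fun i => n ^ (1 - ρ) * ![y 0, y 1] i)
  have hW : (fun y : Fin 3 → ℝ =>
      Complex.exp (Complex.I * n * (y 0 * ω1 + y 1 * ω2)) * Real.exp (-n * y 2) *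
        ((n * y 2) ^ d : ℝ) * q (fun i => n ^ (1 - ρ) * ![y 0, y 1] i)) =
      fun y => Complex.exp (φ y * Complex.I) * (P y * Q y : ℝ) := by
    funext y
    simp only [φ, P, Q]
    push_cast
    ring_nf
  have hn₀ : 0 ≤ n := zero_le_one.trans hn
  have hM₀' : 0 ≤ M₀ := (abs_nonneg _).trans (hM₀ 0)
  have hM₁' : 0 ≤ M₁ := (norm_nonneg _).trans (hM₁ 0)
  have hφ : DifferentiableAt ℝ φ x := by fun_prop
  have hP : DifferentiableAt ℝ P x := by fun_prop
  have hQ : DifferentiableAt ℝ Q x := hq.differentiableAt.comp x <| differentiableAt_pi.2 <|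
    Fin.forall_fin_two.2 ⟨by simp only [Matrix.cons_val_zero]; fun_prop,
      by simp only [Matrix.cons_val_one, Matrix.cons_val_fin_one]; fun_prop⟩
  have hPx : |P x| = Real.exp (-(n * x 2)) * (n * x 2) ^ d := by
    rw [abs_of_nonneg (by positivity)]
    simp only [P, neg_mul]
  have hDQ : ‖fderiv ℝ Q x‖ ≤ M₁ * n :=
    (norm_fderiv_comp_smul_pair_le hq hM₁ (by positivity) x).trans
      (mul_le_mul_of_nonneg_left (Real.rpow_le_self_of_one_le hn (by linarith)) hM₁')
  have hDP := norm_fderiv_exp_neg_mul_mul_pow_le hn₀ d 2 hx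
  have hDφ := norm_fderiv_mul_dotProduct_le n ω1 ω2 x
  rw [hW]
  refine (norm_fderiv_cexp_ofReal_mul_I_mul_le hφ hP hQ).trans ?_
  rw [hPx]
  calc _ ≤ Real.exp (-(n * x 2)) * (n * x 2) ^ d * (M₁ * n) +
        M₀ * (n * Real.exp (-(n * x 2)) * ((n * x 2) ^ d + d * (n * x 2) ^ (d - 1))) +
        Real.exp (-(n * x 2)) * (n * x 2) ^ d * M₀ * (|n| * (|ω1| + |ω2|)) := by
        gcongr
        exacts [hM₀ _, hM₀ _]
    _ = _ := by rw [abs_of_nonneg hn₀]; ring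

theorem pow_mul_exp_neg_le_factorial (m : ℕ) {t : ℝ} (ht : 0 ≤ t) :
    t ^ m * Real.exp (-t) ≤ m.factorial := by
  have h := Real.pow_div_factorial_le_exp t ht m
  rw [div_le_iff₀ (by positivity)] at h
  rw [Real.exp_neg, ← div_eq_mul_inv, div_le_iff₀ (Real.exp_pos t)]
  linarith

theorem pow_mul_exp_neg_mul_sq_le (c₁ c₂ : ℝ) {t : ℝ} (ht : 0 ≤ t) (b d : ℕ) :
    t ^ (2 * b) * Real.exp (-t) * (c₁ * t ^ d + c₂ * t ^ (d - 1)) ^ 2 ≤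
      2 * (c₁ ^ 2 + c₂ ^ 2) * (2 * b + 2 * d).factorial := by
  have hF : ((2 * b + 2 * (d - 1)).factorial : ℝ) ≤ (2 * b + 2 * d).factorial := by
    exact_mod_cast Nat.factorial_le (by omega)
  have h₁ := pow_mul_exp_neg_le_factorial (2 * b + 2 * d) ht
  have h₂ := (pow_mul_exp_neg_le_factorial (2 * b + 2 * (d - 1)) ht).trans hF
  calc _ ≤ t ^ (2 * b) * Real.exp (-t) * (2 * (c₁ * t ^ d) ^ 2 + 2 * (c₂ * t ^ (d - 1)) ^ 2) := by
        gcongr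
        nlinarith [sq_nonneg (c₁ * t ^ d - c₂ * t ^ (d - 1))]
    _ = 2 * c₁ ^ 2 * (t ^ (2 * b + 2 * d) * Real.exp (-t)) +
        2 * c₂ ^ 2 * (t ^ (2 * b + 2 * (d - 1)) * Real.exp (-t)) := by ring
    _ ≤ 2 * c₁ ^ 2 * (2 * b + 2 * d).factorial + 2 * c₂ ^ 2 * (2 * b + 2 * d).factorial := by
        gcongr
    _ = _ := by ring

theorem pow_mul_sq_exp_neg_mul_le (c₁ c₂ : ℝ) {n s : ℝ} (hn : 0 < n) (hs : 0 ≤ s) (b d : ℕ) :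
    s ^ (2 * b) * (n * Real.exp (-(n * s)) * (c₁ * (n * s) ^ d + c₂ * (n * s) ^ (d - 1))) ^ 2 ≤
      n ^ 2 / n ^ (2 * b) * (2 * (c₁ ^ 2 + c₂ ^ 2) * (2 * b + 2 * d).factorial) *
        Real.exp (-(n * s)) := by
  have key := pow_mul_exp_neg_mul_sq_le c₁ c₂ (mul_nonneg hn.le hs) b d
  calc _ = n ^ 2 / n ^ (2 * b) * ((n * s) ^ (2 * b) * Real.exp (-(n * s)) *
        (c₁ * (n * s) ^ d + c₂ * (n * s) ^ (d - 1)) ^ 2) * Real.exp (-(n * s)) := by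
        field_simp
        ring
    _ ≤ _ := by gcongr

theorem integral_Icc_exp_neg_mul_le {n : ℝ} (hn : 0 < n) (s : ℝ) :
    ∫ x in Set.Icc 0 s, Real.exp (-n * x) ≤ 1 / n := by
  calc _ ≤ ∫ x in Set.Ioi 0, Real.exp (-n * x) :=
        setIntegral_mono_set (by simpa only [neg_mul] using exp_neg_integrableOn_Ioi 0 hn)
          (Filter.Eventually.of_forall fun x => (Real.exp_pos _).le)
          (Set.Icc_subset_Ici_self.eventuallyLE.trans Ioi_ae_eq_Ici.symm.le)
    _ = 1 / n := by
        rw [integral_exp_mul_Ioi (by linarith)]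
        field_simp
        simp

theorem setIntegral_univ_pi_comp_apply {ι : Type*} [Fintype ι] [DecidableEq ι]
    (s : ι → Set ℝ) (k : ι) (f : ℝ → ℝ) :
    ∫ y in Set.univ.pi s, f (y k) =
      (∏ i ∈ Finset.univ.erase k, volume.real (s i)) * ∫ x in s k, f x := by
  have hprod : (fun y : ι → ℝ => f (y k)) =
      fun y => ∏ i, (Function.update (fun _ _ => 1) k f) i (y i) := by
    funext y
    rw [← Finset.mul_prod_erase _ _ (Finset.mem_univ k), Function.update_self,
      Finset.prod_eq_one fun i hi => by rw [Function.update_of_ne (Finset.ne_of_mem_erase hi)],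
      mul_one]
  rw [volume_pi, Measure.restrict_pi_pi, hprod, integral_fintype_prod_eq_prod,
    ← Finset.mul_prod_erase _ _ (Finset.mem_univ k), Function.update_self, mul_comm]
  congr 1
  refine Finset.prod_congr rfl fun i hi => ?_
  rw [Function.update_of_ne (Finset.ne_of_mem_erase hi), setIntegral_const, smul_eq_mul, mul_one]

theorem slab_eq_univ_pi (ρ : ℝ) (N : ℕ) :
    slab ρ N = Set.univ.pi ![Set.Icc (-(N : ℝ) ^ (ρ - 1)) ((N : ℝ) ^ (ρ - 1)),
      Set.Icc (-(N : ℝ) ^ (ρ - 1)) ((N : ℝ) ^ (ρ - 1)), Set.Icc 0 ((N : ℝ) ^ (-(1 : ℝ) / 2))] := by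
  ext y
  simp [slab, Fin.forall_fin_succ, abs_le, and_assoc]

theorem measurableSet_slab (ρ : ℝ) (N : ℕ) : MeasurableSet (slab ρ N) := by
  rw [slab_eq_univ_pi]
  exact MeasurableSet.univ_pi fun i => by fin_cases i <;> exact measurableSet_Icc

theorem isCompact_slab (ρ : ℝ) (N : ℕ) : IsCompact (slab ρ N) := by
  rw [slab_eq_univ_pi]
  exact isCompact_univ_pi fun i => by fin_cases i <;> exact isCompact_Icc

theorem integral_slab_exp_neg_mul_le (ρ : ℝ) {N : ℕ} (hN : 1 ≤ N) :
    ∫ y in slab ρ N, Real.exp (-N * y 2) ≤ (2 * (N : ℝ) ^ (ρ - 1)) ^ 2 / N := by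
  have hN' : (0 : ℝ) < N := by exact_mod_cast hN
  have herase : Finset.univ.erase (2 : Fin 3) = {0, 1} := by decide
  rw [slab_eq_univ_pi, setIntegral_univ_pi_comp_apply _ 2 fun x => Real.exp (-N * x), herase,
    Finset.prod_pair (by decide)]
  simp only [Matrix.cons_val_zero, Matrix.cons_val_one, Matrix.cons_val_two, Matrix.head_cons,
    Matrix.tail_cons, Real.volume_real_Icc]
  have hr : (N : ℝ) ^ (ρ - 1) - -(N : ℝ) ^ (ρ - 1) = 2 * (N : ℝ) ^ (ρ - 1) := by ring
  rw [hr, max_eq_left (by positivity)]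
  exact (mul_le_mul_of_nonneg_left (integral_Icc_exp_neg_mul_le hN' _) (by positivity)).trans_eq
    (by ring)

theorem sqrt_pow_div_pow_mul_eq_rpow {n : ℝ} (hn : 0 < n) (ρ : ℝ) {K : ℝ} (hK : 0 ≤ K) (b : ℕ) :
    √(n ^ 2 / n ^ (2 * b) * K * ((2 * n ^ (ρ - 1)) ^ 2 / n)) =
      2 * √K * n ^ (-(1 : ℝ) / 2 + ρ - b) := by
  have h : n ^ 2 / n ^ (2 * b) * (n ^ (ρ - 1)) ^ 2 / n = (n ^ (-(1 : ℝ) / 2 + ρ - b)) ^ 2 := by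
    rw [← Real.rpow_natCast, ← Real.rpow_natCast, ← Real.rpow_mul_natCast hn.le,
      ← Real.rpow_mul_natCast hn.le, ← Real.rpow_sub hn, ← Real.rpow_add hn,
      ← Real.rpow_sub_one hn.ne']
    congr 1
    push_cast
    ring
  rw [show n ^ 2 / n ^ (2 * b) * K * ((2 * n ^ (ρ - 1)) ^ 2 / n) =
      (2 * √K) ^ 2 * (n ^ 2 / n ^ (2 * b) * (n ^ (ρ - 1)) ^ 2 / n) by
    rw [mul_pow, mul_pow, Real.sq_sqrt hK]; ring, h, ← mul_pow, Real.sqrt_sq (by positivity)]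

theorem stmt17_general (ρ ω1 ω2 : ℝ) (hρ : 0 < ρ)
    (q : (Fin 2 → ℝ) → ℝ) (hq : ContDiff ℝ (⊤ : ℕ∞) q) (hqc : HasCompactSupport q)
    (d b : ℕ) :
    ∃ C > 0, ∀ N : ℕ, 1 ≤ N →
      ∀ W : (Fin 3 → ℝ) → ℂ,
        (W = fun y =>
          Complex.exp (Complex.I * N * (y 0 * ω1 + y 1 * ω2)) *
            Real.exp (-(N : ℝ) * y 2) * (((N : ℝ) * y 2) ^ d : ℝ) *
            q (fun i => (N : ℝ) ^ (1 - ρ) * ![y 0, y 1] i)) →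
        ∀ l : Fin 3,
          Real.sqrt (∫ y in slab ρ N, (y 2) ^ (2 * b) * ‖fderiv ℝ W y (Pi.single l 1)‖ ^ 2)
            ≤ C * (N : ℝ) ^ (-(1 : ℝ) / 2 + ρ - b) := by
  obtain ⟨M₀, hM₀⟩ := hqc.exists_bound_of_continuous hq.continuous
  obtain ⟨M₁, hM₁⟩ := (hqc.fderiv ℝ).exists_bound_of_continuous (hq.continuous_fderiv (by simp))
  simp only [Real.norm_eq_abs] at hM₀
  set K := 2 * ((M₀ * (|ω1| + |ω2| + 1) + M₁) ^ 2 + (d * M₀) ^ 2) * (2 * b + 2 * d).factorial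
  refine ⟨2 * √K + 1, by positivity, fun N hN W hW l => ?_⟩
  have hpt : ∀ y ∈ slab ρ N, (y 2) ^ (2 * b) * ‖fderiv ℝ W y (Pi.single l 1)‖ ^ 2 ≤
      N ^ 2 / N ^ (2 * b) * K * Real.exp (-N * y 2) := fun y hy => by
    have hD := norm_fderiv_profile_le (ω1 := ω1) (ω2 := ω2) d (hq.differentiable (by simp))
      hM₀ hM₁ hρ.le (Nat.one_le_cast.2 hN) hy.2.2.1
    rw [Complex.ofReal_natCast, ← hW] at hD
    have hv : ‖fderiv ℝ W y (Pi.single l 1)‖ ≤ ‖fderiv ℝ W y‖ := by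
      simpa [Pi.norm_single] using (fderiv ℝ W y).le_opNorm (Pi.single l 1)
    refine (mul_le_mul_of_nonneg_left (pow_le_pow_left₀ (norm_nonneg _) (hv.trans hD) 2)
      (pow_nonneg hy.2.2.1 _)).trans ?_
    simpa only [neg_mul] using pow_mul_sq_exp_neg_mul_le _ _ (by positivity) hy.2.2.1 b d
  calc √(∫ y in slab ρ N, (y 2) ^ (2 * b) * ‖fderiv ℝ W y (Pi.single l 1)‖ ^ 2)
      ≤ √(∫ y in slab ρ N, N ^ 2 / N ^ (2 * b) * K * Real.exp (-N * y 2)) :=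
        Real.sqrt_le_sqrt <| integral_mono_of_nonneg
          (ae_restrict_of_forall_mem (measurableSet_slab ρ N) fun y hy => by
            have := hy.2.2.1
            positivity)
          ((by fun_prop : Continuous fun y : Fin 3 → ℝ => _).continuousOn.integrableOn_compact
            (isCompact_slab ρ N))
          (ae_restrict_of_forall_mem (measurableSet_slab ρ N) hpt)
    _ ≤ √(N ^ 2 / N ^ (2 * b) * K * ((2 * (N : ℝ) ^ (ρ - 1)) ^ 2 / N)) := by
        rw [integral_const_mul]
        gcongr
        exact integral_slab_exp_neg_mul_le ρ hN
    _ = 2 * √K * (N : ℝ) ^ (-(1 : ℝ) / 2 + ρ - b) :=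
        sqrt_pow_div_pow_mul_eq_rpow (by positivity) ρ (by positivity) b
    _ ≤ (2 * √K + 1) * (N : ℝ) ^ (-(1 : ℝ) / 2 + ρ - b) := by gcongr; linarith

/-- Weighted `L²(Ω_N)` bound for the first derivatives of the oscillating profile
`W_N(y) = e^{iN y'·ω'} e^{−Ny₃} (Ny₃)^d q(N^{1−ρ} y')`:
`(∫_{Ω_N} y₃^{2b} |∂W_N/∂y_l|² dy)^{1/2} ≤ C N^{−1/2+ρ−b}` with `C` independent of `N`. -/
theorem stmt17 (ρ ω1 ω2 : ℝ) (hρ : 0 < ρ) (hρ1 : ρ < 1) (hω : ω1 ^ 2 + ω2 ^ 2 = 1)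
    (q : (Fin 2 → ℝ) → ℝ) (hq : ContDiff ℝ (⊤ : ℕ∞) q) (hqc : HasCompactSupport q)
    (hqsupp : tsupport q ⊆ Metric.ball (0 : Fin 2 → ℝ) 1)
    (d b : ℕ) :
    ∃ C > 0, ∀ N : ℕ, 1 ≤ N →
      ∀ W : (Fin 3 → ℝ) → ℂ,
        (W = fun y =>
          Complex.exp (Complex.I * N * (y 0 * ω1 + y 1 * ω2)) *
            Real.exp (-(N : ℝ) * y 2) * (((N : ℝ) * y 2) ^ d : ℝ) *
            q (fun i => (N : ℝ) ^ (1 - ρ) * ![y 0, y 1] i)) →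
        ∀ l : Fin 3,
          Real.sqrt (∫ y in slab ρ N, (y 2) ^ (2 * b) * ‖fderiv ℝ W y (Pi.single l 1)‖ ^ 2)
            ≤ C * (N : ℝ) ^ (-(1 : ℝ) / 2 + ρ - b) :=
  stmt17_general ρ ω1 ω2 hρ q hq hqc d b
end
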